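/- arXiv:2506.13088 — 2 statements merged into one kernel-verified Lean document; each statement's English description precedes it below -/
import Mathlib

section
/- Let (V^{(0)}, m^{(0)}) be the solution of the HJB–Kolmogorov system with ε = 0, and set ρ := √(r² + r) − r. Then for every k ∈ {1,…,K} and every t ∈ [0,T]: 0 ≤ ΔV^{(0)}_k(t) ≤ 1 − 2ρ < 1, and the function t ↦ ΔV^{(0)}_k(t) is nonincreasing on [0,T] (its derivative is ≤ 0). -/
noncomputable section

/-- The proportion of active firms: `η(t) = ∑_{k=1}^K m_k(t)`. -/
def marketEta (K : ℕ) (m : ℕ → ℝ → ℝ) (t : ℝ) : ℝ := ∑ k ∈ Finset.Icc 1 K, m k t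

/-- The interaction functional
`φ(t) = (∑_{k=1}^K m_k(t)·ΔV_k(t) − η(t)) / (2 + ε·η(t))`, where `ΔV_k = V_k − V_{k−1}`. -/
def marketPhi (K : ℕ) (ε : ℝ) (V m : ℕ → ℝ → ℝ) (t : ℝ) : ℝ :=
  ((∑ k ∈ Finset.Icc 1 K, m k t * (V k t - V (k - 1) t)) - marketEta K m t) /
    (2 + ε * marketEta K m t)

/-- The equilibrium sale intensity `G_k(t) = ½(1 − ΔV_k(t) + ε·φ(t))`. -/
def marketLam (K : ℕ) (ε : ℝ) (V m : ℕ → ℝ → ℝ) (k : ℕ) (t : ℝ) : ℝ :=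
  (1 / 2) * (1 - (V k t - V (k - 1) t) + ε * marketPhi K ε V m t)

/-- `(V, m)` is a solution of the HJB–Kolmogorov system on `[0, T]` with data `K, r, ε, M`:
`V_1, …, V_K` and `m_0, …, m_K` are continuously differentiable on `[0, T]`, `V_0 ≡ 0`,
the HJB equations `V_k' − r V_k + ¼(1 − ΔV_k + ε φ)² = 0` hold for `k = 1, …, K`,
the Kolmogorov equations hold, `V_k(T) = 0`, and `m_k(0) = M_k`. -/
def IsHJBKolSolution (K : ℕ) (T r ε : ℝ) (M : ℕ → ℝ) (V m : ℕ → ℝ → ℝ) : Prop :=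
  (∀ t : ℝ, V 0 t = 0) ∧
  (∀ k, 1 ≤ k → k ≤ K → ContDiffOn ℝ 1 (V k) (Set.Icc 0 T)) ∧
  (∀ k, k ≤ K → ContDiffOn ℝ 1 (m k) (Set.Icc 0 T)) ∧
  (∀ k, 1 ≤ k → k ≤ K → ∀ t ∈ Set.Icc (0 : ℝ) T,
    derivWithin (V k) (Set.Icc 0 T) t - r * V k t +
      (1 / 4) * (1 - (V k t - V (k - 1) t) + ε * marketPhi K ε V m t) ^ 2 = 0) ∧
  (∀ t ∈ Set.Icc (0 : ℝ) T,
    derivWithin (m 0) (Set.Icc 0 T) t = marketLam K ε V m 1 t * m 1 t) ∧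
  (∀ k, 1 ≤ k → k ≤ K - 1 → ∀ t ∈ Set.Icc (0 : ℝ) T,
    derivWithin (m k) (Set.Icc 0 T) t =
      marketLam K ε V m (k + 1) t * m (k + 1) t - marketLam K ε V m k t * m k t) ∧
  (∀ t ∈ Set.Icc (0 : ℝ) T,
    derivWithin (m K) (Set.Icc 0 T) t = -(marketLam K ε V m K t) * m K t) ∧
  (∀ k, 1 ≤ k → k ≤ K → V k T = 0) ∧
  (∀ k, k ≤ K → m k 0 = M k)

/-!
Write `Δ_k = V_k − V_{k−1}`. Subtracting consecutive HJB equations gives the Riccati equation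
`Δ_k' = r Δ_k − ¼(1 − Δ_k)² + q_k` with `q_1 = 0`, `q_k = ¼(1 − Δ_{k−1})²`, and `Δ_k(T) = 0`.
Differentiating, `p = Δ_k'` solves the linear equation `p' = (r + ½(1 − Δ_k)) p + q_k'`, so
`p(T) = q_k(T) − ¼ ≤ 0` propagates backward to `p ≤ 0` as long as `q_k` is nondecreasing.
Hence `Δ_k` is nonincreasing and `Δ_k ≥ Δ_k(T) = 0`; and `p ≤ 0`, `q_k ≥ 0` keep `Δ_k` out of
the interval where `rX > ¼(1 − X)²`, which lies between the root `1 − 2ρ` and `1`, so by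
continuity `Δ_k ≤ 1 − 2ρ`. Finally `Δ_k ≤ 1 − 2ρ < 1` and `Δ_k' ≤ 0` make `q_{k+1}`
nondecreasing, which drives the induction on `k`.
-/

open Set Real

lemma monotoneOn_mul_exp_of_hasDerivAt {a b L : ℝ} {F : ℝ → ℝ} (hF : ContinuousOn F (Icc a b))
    (hd : ∀ t ∈ Ioo a b, ∃ d, HasDerivAt F d t ∧ -L * F t ≤ d) :
    MonotoneOn (fun t => F t * exp (L * t)) (Icc a b) := by
  choose! d hdF hdL using hd
  refine monotoneOn_of_hasDerivWithinAt_nonneg (convex_Icc a b) (hF.mul (by fun_prop))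
    (f' := fun t => d t * exp (L * t) + F t * (exp (L * t) * (L * 1))) ?_ ?_
  · intro t ht
    rw [interior_Icc] at ht ⊢
    exact ((hdF t ht).mul ((hasDerivAt_id t).const_mul L).exp).hasDerivWithinAt
  · intro t ht
    rw [interior_Icc] at ht
    calc (0 : ℝ) ≤ (d t + L * F t) * exp (L * t) :=
          mul_nonneg (by linarith [hdL t ht]) (exp_pos _).le
      _ = _ := by ring

lemma nonpos_of_hasDerivAt_ge_neg_mul {a b L : ℝ} {F : ℝ → ℝ} (hF : ContinuousOn F (Icc a b))
    (hd : ∀ t ∈ Ioo a b, 0 < F t → ∃ d, HasDerivAt F d t ∧ -L * F t ≤ d) (hb : F b ≤ 0) :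
    ∀ t ∈ Icc a b, F t ≤ 0 := by
  intro t ht
  by_contra! hFt
  set S := Icc t b ∩ F ⁻¹' Iic 0
  have hS : IsCompact S := isCompact_Icc.of_isClosed_subset
    ((hF.mono (Icc_subset_Icc ht.1 le_rfl)).preimage_isClosed_of_isClosed isClosed_Icc
      isClosed_Iic) inter_subset_left
  obtain ⟨t₁, ⟨⟨htt₁, ht₁b⟩, hFt₁⟩, ht₁_least⟩ :=
    hS.exists_isLeast ⟨b, ⟨ht.2, le_rfl⟩, show F b ≤ 0 from hb⟩
  have hpos : ∀ s ∈ Ico t t₁, 0 < F s := fun s hs => by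
    by_contra! hFs
    exact hs.2.not_ge (ht₁_least ⟨⟨hs.1, hs.2.le.trans ht₁b⟩, hFs⟩)
  have htt₁' : t < t₁ := htt₁.lt_of_ne (by rintro rfl; exact (hFt₁ : F t ≤ 0).not_gt hFt)
  have hmono := monotoneOn_mul_exp_of_hasDerivAt (L := L) (hF.mono (Icc_subset_Icc ht.1 ht₁b))
    fun s hs => hd s ⟨ht.1.trans_lt hs.1, hs.2.trans_le ht₁b⟩ (hpos s ⟨hs.1.le, hs.2⟩)
  have := hmono ⟨le_rfl, htt₁⟩ ⟨htt₁, le_rfl⟩ htt₁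
  nlinarith [exp_pos (L * t), exp_pos (L * t₁), mul_pos hFt (exp_pos (L * t)),
    mul_nonpos_of_nonpos_of_nonneg (hFt₁ : F t₁ ≤ 0) (exp_pos (L * t₁)).le]

/-- `p = g'` solves `p' = f'(g) p + q'` with `q' ≥ 0`, so `p ≤ 0` propagates backward. -/
theorem ode_rhs_nonpos_of_right {a b : ℝ} {f f' g q : ℝ → ℝ} (hf : ∀ x, HasDerivAt f (f' x) x)
    (hf' : Continuous f')
    (hg : ∀ t ∈ Icc a b, HasDerivWithinAt g (f (g t) + q t) (Icc a b) t)
    (hq : ∀ t ∈ Icc a b, ∃ d ≥ 0, HasDerivWithinAt q d (Icc a b) t)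
    (hb : f (g b) + q b ≤ 0) : ∀ t ∈ Icc a b, f (g t) + q t ≤ 0 := by
  have hfc : Continuous f := continuous_iff_continuousAt.2 fun x => (hf x).continuousAt
  have hgc : ContinuousOn g (Icc a b) := fun t ht => (hg t ht).continuousWithinAt
  have hqc : ContinuousOn q (Icc a b) := fun t ht =>
    (hq t ht).choose_spec.2.continuousWithinAt
  obtain ⟨C, hC⟩ := isCompact_Icc.bddBelow_image (hf'.comp_continuousOn hgc)
  refine nonpos_of_hasDerivAt_ge_neg_mul (L := -C) ((hfc.comp_continuousOn hgc).add hqc) ?_ hb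
  intro t ht hpos
  have htI := Ioo_subset_Icc_self ht
  obtain ⟨dq, hdq, hqt⟩ := hq t htI
  refine ⟨_, (((hf (g t)).comp_hasDerivWithinAt t (hg t htI)).add hqt).hasDerivAt
    (Icc_mem_nhds ht.1 ht.2), ?_⟩
  have hCt : C ≤ f' (g t) := hC ⟨t, htI, rfl⟩
  nlinarith [mul_le_mul_of_nonneg_right hCt hpos.le]

lemma le_of_forall_notMem_Ioo {s : Set ℝ} {g : ℝ → ℝ} {w w' t₀ : ℝ} (hs : IsPreconnected s)
    (hg : ContinuousOn g s) (hww' : w < w') (hgap : ∀ t ∈ s, g t ∉ Ioo w w')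
    (ht₀ : t₀ ∈ s) (h₀ : g t₀ ≤ w) : ∀ t ∈ s, g t ≤ w := by
  intro t ht
  by_contra! hwt
  have hw't : w' ≤ g t := not_lt.1 fun h => hgap t ht ⟨hwt, h⟩
  obtain ⟨u, hu, hgu⟩ := hs.intermediate_value ht₀ ht hg
    (⟨by linarith, by linarith⟩ : (w + w') / 2 ∈ Icc (g t₀) (g t))
  exact hgap u hu ⟨by linarith, by linarith⟩

lemma antitoneOn_of_forall_hasDerivWithinAt_nonpos {s : Set ℝ} {f : ℝ → ℝ} (hs : Convex ℝ s)
    (h : ∀ t ∈ s, ∃ d ≤ 0, HasDerivWithinAt f d s t) : AntitoneOn f s := by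
  choose! d hd hfd using h
  exact antitoneOn_of_hasDerivWithinAt_nonpos hs (fun t ht => (hfd t ht).continuousWithinAt)
    (fun t ht => (hfd t (interior_subset ht)).mono interior_subset)
    fun t ht => hd t (interior_subset ht)

/-- The root in `(0, 1)` of `r X = ¼(1 - X)²`. -/
def riccatiRoot (r : ℝ) : ℝ := 1 - 2 * (√(r ^ 2 + r) - r)

lemma riccatiRoot_pos {r : ℝ} (hr : 0 ≤ r) : 0 < riccatiRoot r := by
  have : √(r ^ 2 + r) < r + 1 / 2 := (sqrt_lt' (by linarith)).2 (by nlinarith)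
  unfold riccatiRoot
  linarith

lemma riccatiRoot_lt_one {r : ℝ} (hr : 0 < r) : riccatiRoot r < 1 := by
  have : r < √(r ^ 2 + r) := (lt_sqrt hr.le).2 (by nlinarith)
  unfold riccatiRoot
  linarith

lemma four_mul_mul_riccatiRoot {r : ℝ} (hr : 0 ≤ r) :
    4 * r * riccatiRoot r = (1 - riccatiRoot r) ^ 2 := by
  have := sq_sqrt (by positivity : 0 ≤ r ^ 2 + r)
  unfold riccatiRoot
  linear_combination (-4) * this

theorem riccati_bounds {a b r : ℝ} {g q : ℝ → ℝ} (hr : 0 < r)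
    (hg : ∀ t ∈ Icc a b, HasDerivWithinAt g (r * g t - (1 - g t) ^ 2 / 4 + q t) (Icc a b) t)
    (hq : ∀ t ∈ Icc a b, ∃ d ≥ 0, HasDerivWithinAt q d (Icc a b) t)
    (hq₀ : ∀ t ∈ Icc a b, 0 ≤ q t) (hqb : q b ≤ 1 / 4) (hgb : g b = 0) :
    ∀ t ∈ Icc a b, (∃ d ≤ 0, HasDerivWithinAt g d (Icc a b) t) ∧
      0 ≤ g t ∧ g t ≤ riccatiRoot r := by
  set w := riccatiRoot r
  have hw₀ : 0 < w := riccatiRoot_pos hr.le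
  have hrhs := ode_rhs_nonpos_of_right (f := fun x => r * x - (1 - x) ^ 2 / 4)
    (f' := fun x => r + (1 - x) / 2)
    (fun x => (((hasDerivAt_id' x).const_mul r).sub
      ((((hasDerivAt_id' x).const_sub 1).pow 2).div_const 4)).congr_deriv (by norm_num; ring))
    (by fun_prop) hg hq (by simp only [hgb]; linarith)
  have hanti : AntitoneOn g (Icc a b) :=
    antitoneOn_of_forall_hasDerivWithinAt_nonpos (convex_Icc a b)
      fun t ht => ⟨_, hrhs t ht, hg t ht⟩
  intro t ht
  have hbI : b ∈ Icc a b := ⟨ht.1.trans ht.2, le_rfl⟩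
  refine ⟨⟨_, hrhs t ht, hg t ht⟩, hgb ▸ hanti ht hbI ht.2, ?_⟩
  refine le_of_forall_notMem_Ioo isPreconnected_Icc (fun s hs => (hg s hs).continuousWithinAt)
    (riccatiRoot_lt_one hr) ?_ hbI (hgb ▸ hw₀.le) t ht
  rintro s hs ⟨hws, hs1⟩
  have key : 4 * w * (r * g s - (1 - g s) ^ 2 / 4) = (g s - w) * (1 - w * g s) := by
    linear_combination g s * four_mul_mul_riccatiRoot hr.le
  nlinarith [hrhs s hs, hq₀ s hs, mul_pos (sub_pos.2 hws) (by nlinarith : 0 < 1 - w * g s)]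

def deltaV (V : ℕ → ℝ → ℝ) (k : ℕ) (t : ℝ) : ℝ := V k t - V (k - 1) t

namespace IsHJBKolSolution

variable {K k : ℕ} {T r t : ℝ} {M : ℕ → ℝ} {V m : ℕ → ℝ → ℝ}

lemma hasDerivWithinAt_V (hsol : IsHJBKolSolution K T r 0 M V m) (hk : 1 ≤ k) (hkK : k ≤ K)
    (ht : t ∈ Icc 0 T) :
    HasDerivWithinAt (V k) (r * V k t - (1 - deltaV V k t) ^ 2 / 4) (Icc 0 T) t := by
  obtain ⟨-, hVreg, -, hHJB, -⟩ := hsol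
  have hHJBk := hHJB k hk hkK t ht
  simp only [zero_mul, add_zero] at hHJBk
  refine ((hVreg k hk hkK).differentiableOn one_ne_zero t ht).hasDerivWithinAt.congr_deriv ?_
  unfold deltaV
  linarith

lemma hasDerivWithinAt_deltaV_one (hsol : IsHJBKolSolution K T r 0 M V m) (hK : 1 ≤ K)
    (ht : t ∈ Icc 0 T) :
    HasDerivWithinAt (deltaV V 1) (r * deltaV V 1 t - (1 - deltaV V 1 t) ^ 2 / 4) (Icc 0 T) t := by
  have h := hsol.hasDerivWithinAt_V le_rfl hK ht
  have hV₁ : deltaV V 1 = V 1 := funext fun s => by simp [deltaV, hsol.1 s]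
  rw [hV₁] at h ⊢
  exact h

lemma hasDerivWithinAt_deltaV_succ (hsol : IsHJBKolSolution K T r 0 M V m) (hk : 1 ≤ k)
    (hkK : k + 1 ≤ K) (ht : t ∈ Icc 0 T) :
    HasDerivWithinAt (deltaV V (k + 1))
      (r * deltaV V (k + 1) t - (1 - deltaV V (k + 1) t) ^ 2 / 4 + (1 - deltaV V k t) ^ 2 / 4)
      (Icc 0 T) t :=
  ((hsol.hasDerivWithinAt_V (by omega) hkK ht).sub
    (hsol.hasDerivWithinAt_V hk (by omega) ht)).congr_deriv
      (by simp only [deltaV, Nat.add_sub_cancel]; ring)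

lemma deltaV_right_eq_zero (hsol : IsHJBKolSolution K T r 0 M V m) (hk : 1 ≤ k)
    (hkK : k ≤ K) : deltaV V k T = 0 := by
  obtain ⟨hV₀, -, -, -, -, -, -, hVT, -⟩ := hsol
  have hVT' : ∀ j ≤ K, V j T = 0 := fun j hj =>
    j.eq_zero_or_pos.elim (fun h => h ▸ hV₀ T) fun h => hVT j h hj
  simp [deltaV, hVT' k hkK, hVT' (k - 1) (by omega)]

theorem deltaV_bounds (hsol : IsHJBKolSolution K T r 0 M V m) (hr : 0 < r) :
    ∀ k, 1 ≤ k → k ≤ K → ∀ t ∈ Icc 0 T,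
      (∃ d ≤ 0, HasDerivWithinAt (deltaV V k) d (Icc 0 T) t) ∧
        0 ≤ deltaV V k t ∧ deltaV V k t ≤ riccatiRoot r := by
  intro k hk
  induction k, hk using Nat.le_induction with
  | base =>
    intro hK
    exact riccati_bounds (q := 0) hr
      (fun t ht => by simpa using hsol.hasDerivWithinAt_deltaV_one hK ht)
      (fun t _ => ⟨0, le_rfl, hasDerivWithinAt_const _ _ _⟩) (fun _ _ => le_rfl) (by norm_num)
      (hsol.deltaV_right_eq_zero le_rfl hK)
  | succ k hk ih =>
    intro hK
    have ih := ih (by omega)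
    refine riccati_bounds hr (fun t ht => hsol.hasDerivWithinAt_deltaV_succ hk hK ht) ?_
      (fun _ _ => by positivity) ?_ (hsol.deltaV_right_eq_zero (by omega) hK)
    · intro t ht
      obtain ⟨⟨d, hd, hderiv⟩, -, hle⟩ := ih t ht
      refine ⟨_, ?_, ((hderiv.const_sub 1).pow 2).div_const 4⟩
      have := riccatiRoot_lt_one hr
      simp only [Nat.cast_ofNat, Nat.add_one_sub_one, pow_one]
      nlinarith
    · simp [hsol.deltaV_right_eq_zero hk (by omega)]

end IsHJBKolSolution

theorem deltaV_bounds_of_no_interaction_general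
    (K : ℕ) (T r : ℝ) (hr : 0 < r)
    (M : ℕ → ℝ)
    (V m : ℕ → ℝ → ℝ) (hsol : IsHJBKolSolution K T r 0 M V m) :
    ∀ k, 1 ≤ k → k ≤ K →
      (∀ t ∈ Set.Icc (0 : ℝ) T,
        0 ≤ V k t - V (k - 1) t ∧
        V k t - V (k - 1) t ≤ 1 - 2 * (Real.sqrt (r ^ 2 + r) - r)) ∧
      1 - 2 * (Real.sqrt (r ^ 2 + r) - r) < 1 ∧
      AntitoneOn (fun t => V k t - V (k - 1) t) (Set.Icc 0 T) := by
  intro k hk hkK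
  have h := hsol.deltaV_bounds hr k hk hkK
  exact ⟨fun t ht => (h t ht).2, riccatiRoot_lt_one hr,
    antitoneOn_of_forall_hasDerivWithinAt_nonpos (convex_Icc 0 T) fun t ht => (h t ht).1⟩

/-- For the solution of the `ε = 0` system, with `ρ = √(r² + r) − r`, the marginal values
satisfy `0 ≤ ΔV_k⁰(t) ≤ 1 − 2ρ < 1` on `[0, T]` and `t ↦ ΔV_k⁰(t)` is nonincreasing. -/
theorem deltaV_bounds_of_no_interaction
    (K : ℕ) (hK : 1 ≤ K) (T r : ℝ) (hT : 0 < T) (hr : 0 < r)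
    (M : ℕ → ℝ) (hM : ∀ k, k ≤ K → 0 ≤ M k)
    (hMsum : ∑ k ∈ Finset.Icc 0 K, M k = 1)
    (V m : ℕ → ℝ → ℝ) (hsol : IsHJBKolSolution K T r 0 M V m) :
    ∀ k, 1 ≤ k → k ≤ K →
      (∀ t ∈ Set.Icc (0 : ℝ) T,
        0 ≤ V k t - V (k - 1) t ∧
        V k t - V (k - 1) t ≤ 1 - 2 * (Real.sqrt (r ^ 2 + r) - r)) ∧
      1 - 2 * (Real.sqrt (r ^ 2 + r) - r) < 1 ∧
      AntitoneOn (fun t => V k t - V (k - 1) t) (Set.Icc 0 T) :=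
  deltaV_bounds_of_no_interaction_general K T r hr M V m hsol
end
end

section
/- Let (V^{(0)}, m^{(0)}) be the solution of the HJB–Kolmogorov system with ε = 0, and set η^{(0)}(t) := Σ_{k=1}^K m^{(0)}_k(t). Then for every k ∈ {1,…,K} and every t ∈ [0,T]: 0 ≤ m^{(0)}_k(t) ≤ 1 and 0 ≤ η^{(0)}(t) ≤ 1. -/
/-!
At `ε = 0` the sale intensities are `G_k = (1 - ΔV_k) / 2`. By the HJB equations, `ΔV_k`
vanishes at `T` and has derivative at least `r > 0` wherever `ΔV_k = 1`, so going backwards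
in time it never exceeds `1`: every `G_k` is nonnegative. The Kolmogorov equations are the
conservation law `m_k' = F_{k+1} - F_k` for the fluxes `F_k = G_k m_k`, so the total mass stays
`1`, and since the inflow `F_{k+1}` into state `k` is nonnegative once `m_{k+1} ≥ 0`, downward
induction on `k` keeps every `m_k` nonnegative.
-/

noncomputable section

open Set

/-- Time-reversed form of `image_le_of_deriv_right_lt_deriv_boundary`, proved by reflecting
`[a, b]`. -/
theorem image_le_of_right_le_of_deriv_pos_of_eq {u u' : ℝ → ℝ} {a b c : ℝ}
    (hu : ∀ x ∈ Icc a b, HasDerivWithinAt u (u' x) (Icc a b) x) (hb : u b ≤ c)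
    (hcross : ∀ x ∈ Ioc a b, u x = c → 0 < u' x) :
    ∀ x ∈ Icc a b, u x ≤ c := by
  have hrefl : MapsTo (fun s => a + b - s) (Icc a b) (Icc a b) :=
    fun s hs => ⟨by linarith [hs.2], by linarith [hs.1]⟩
  have hw : ∀ s ∈ Icc a b,
      HasDerivWithinAt (u ∘ fun s => a + b - s) (-u' (a + b - s)) (Icc a b) s := fun s hs => by
    simpa using (hu _ (hrefl hs)).comp s ((hasDerivAt_id s).const_sub (a + b)).hasDerivWithinAt
      hrefl
  have hle := image_le_of_deriv_right_lt_deriv_boundary (B := fun _ => c) (B' := fun _ => 0)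
    (fun s hs => (hw s hs).continuousWithinAt)
    (fun s hs => (hw s (Ico_subset_Icc_self hs)).mono_of_mem_nhdsWithin (Icc_mem_nhdsGE_of_mem hs))
    (by simpa using hb) (fun _ => hasDerivAt_const _ _)
    (fun s hs hs_eq => neg_neg_of_pos (hcross _ ⟨by linarith [hs.2], by linarith [hs.1]⟩ hs_eq))
  intro x hx
  simpa using hle (hrefl hx)

theorem image_nonneg_of_left_nonneg_of_deriv_nonneg_of_neg {f f' : ℝ → ℝ} {a b : ℝ}
    (hf : ∀ x ∈ Icc a b, HasDerivWithinAt f (f' x) (Icc a b) x) (ha : 0 ≤ f a)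
    (hneg : ∀ x ∈ Ico a b, f x < 0 → 0 ≤ f' x) :
    ∀ x ∈ Icc a b, 0 ≤ f x := by
  have hbarrier : ∀ δ > 0, ∀ x ∈ Icc a b, -f x ≤ δ * (1 + (x - a)) := by
    intro δ hδ
    refine image_le_of_deriv_right_lt_deriv_boundary (f' := fun x => -f' x) (B' := fun _ => δ)
      (fun x hx => (hf x hx).continuousWithinAt.neg)
      (fun x hx => ((hf x (Ico_subset_Icc_self hx)).mono_of_mem_nhdsWithin
        (Icc_mem_nhdsGE_of_mem hx)).neg) (by simp only [Pi.neg_apply, sub_self]; linarith)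
      (fun x => ?_) (fun x hx hx_eq => ?_)
    · simpa using (((hasDerivAt_id x).sub_const a).const_add 1).const_mul δ
    · rw [Pi.neg_apply] at hx_eq
      have hfx : f x < 0 := by nlinarith [hx.1]
      linarith [hneg x hx hfx]
  intro x hx
  have hlim : Filter.Tendsto (fun δ : ℝ => δ * (1 + (x - a))) (nhdsWithin 0 (Ioi 0))
      (nhds (0 * (1 + (x - a)))) :=
    ((continuous_id.mul continuous_const).tendsto 0).mono_left nhdsWithin_le_nhds
  have := ge_of_tendsto hlim (eventually_nhdsWithin_of_forall fun δ hδ => hbarrier δ hδ x hx)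
  linarith

/-- The flux `F_k = G_k m_k` out of state `k`, extended by `F_0 = F_{K+1} = 0`, so that the
Kolmogorov equations read `m_k' = F_{k+1} - F_k` for all `k ≤ K`. -/
def marketFlux (K : ℕ) (ε : ℝ) (V m : ℕ → ℝ → ℝ) (k : ℕ) (t : ℝ) : ℝ :=
  if 1 ≤ k ∧ k ≤ K then marketLam K ε V m k t * m k t else 0

theorem marketLam_zero (K : ℕ) (V m : ℕ → ℝ → ℝ) (k : ℕ) (t : ℝ) :
    marketLam K 0 V m k t = (1 - (V k t - V (k - 1) t)) / 2 := by
  simp only [marketLam, zero_mul, add_zero]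
  ring

namespace IsHJBKolSolution

variable {K : ℕ} {T r ε : ℝ} {M : ℕ → ℝ} {V m : ℕ → ℝ → ℝ}

theorem differentiableOn_value (hsol : IsHJBKolSolution K T r ε M V m) {k : ℕ} (hk : k ≤ K) :
    DifferentiableOn ℝ (V k) (Icc 0 T) := by
  rcases Nat.eq_zero_or_pos k with rfl | hk1
  · rw [funext hsol.1]
    exact differentiableOn_const 0
  · exact (hsol.2.1 k hk1 hk).differentiableOn one_ne_zero

theorem derivWithin_value_le (hsol : IsHJBKolSolution K T r 0 M V m) {k : ℕ} (hk : k ≤ K)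
    {t : ℝ} (ht : t ∈ Icc 0 T) : derivWithin (V k) (Icc 0 T) t ≤ r * V k t := by
  rcases Nat.eq_zero_or_pos k with rfl | hk1
  · simp [funext hsol.1]
  · obtain ⟨-, -, -, hHJB, -⟩ := hsol
    nlinarith [hHJB k hk1 hk t ht, sq_nonneg (1 - (V k t - V (k - 1) t))]

theorem derivWithin_value_of_gap_eq_one (hsol : IsHJBKolSolution K T r 0 M V m) {k : ℕ}
    (hk1 : 1 ≤ k) (hk : k ≤ K) {t : ℝ} (ht : t ∈ Icc 0 T) (hgap : V k t - V (k - 1) t = 1) :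
    derivWithin (V k) (Icc 0 T) t = r * V k t := by
  obtain ⟨-, -, -, hHJB, -⟩ := hsol
  have hHJB := hHJB k hk1 hk t ht
  rw [hgap] at hHJB
  linarith

theorem value_gap_le_one (hr : 0 < r) (hsol : IsHJBKolSolution K T r 0 M V m) {k : ℕ}
    (hk1 : 1 ≤ k) (hk : k ≤ K) : ∀ t ∈ Icc 0 T, V k t - V (k - 1) t ≤ 1 := by
  have hk' : k - 1 ≤ K := k.sub_le 1 |>.trans hk
  refine image_le_of_right_le_of_deriv_pos_of_eq
    (u' := fun t => derivWithin (V k) (Icc 0 T) t - derivWithin (V (k - 1)) (Icc 0 T) t)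
    (fun t ht => ((hsol.differentiableOn_value hk t ht).hasDerivWithinAt).sub
      ((hsol.differentiableOn_value hk' t ht).hasDerivWithinAt)) ?_ fun t ht hgap => ?_
  · obtain ⟨hV0, -, -, -, -, -, -, hVT, -⟩ := hsol
    rcases Nat.eq_zero_or_pos (k - 1) with hk0 | hk2
    · simp [hVT k hk1 hk, hk0, hV0]
    · simp [hVT k hk1 hk, hVT (k - 1) hk2 hk']
  · have ht' : t ∈ Icc 0 T := Ioc_subset_Icc_self ht
    have hVk := hsol.derivWithin_value_of_gap_eq_one hk1 hk ht' hgap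
    have hVk' := hsol.derivWithin_value_le hk' ht'
    -- at a crossing `V_k' - V_{k-1}' ≥ r (V_k - V_{k-1}) = r`
    nlinarith

theorem differentiableOn_density (hsol : IsHJBKolSolution K T r ε M V m) {k : ℕ} (hk : k ≤ K) :
    DifferentiableOn ℝ (m k) (Icc 0 T) :=
  (hsol.2.2.1 k hk).differentiableOn one_ne_zero

theorem density_zero (hsol : IsHJBKolSolution K T r ε M V m) {k : ℕ} (hk : k ≤ K) :
    m k 0 = M k :=
  hsol.2.2.2.2.2.2.2.2 k hk

theorem derivWithin_density (hK : 1 ≤ K) (hsol : IsHJBKolSolution K T r ε M V m) {k : ℕ}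
    (hk : k ≤ K) {t : ℝ} (ht : t ∈ Icc 0 T) :
    derivWithin (m k) (Icc 0 T) t = marketFlux K ε V m (k + 1) t - marketFlux K ε V m k t := by
  obtain ⟨-, -, -, -, hm0, hmk, hmK, -, -⟩ := hsol
  rcases Nat.eq_zero_or_pos k with rfl | hk1
  · simp [marketFlux, hm0 t ht, hK]
  · rcases hk.lt_or_eq with hkK | rfl
    · simp [marketFlux, hmk k hk1 (by omega) t ht, hk1.ne', hk, Nat.succ_le_of_lt hkK]
    · simp [marketFlux, hmK t ht, hk1.ne']

theorem sum_density_eq (hK : 1 ≤ K) (hsol : IsHJBKolSolution K T r ε M V m) :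
    ∀ t ∈ Icc 0 T, ∑ k ∈ Finset.Icc 0 K, m k t = ∑ k ∈ Finset.Icc 0 K, M k := by
  have hdiff : DifferentiableOn ℝ (fun t => ∑ k ∈ Finset.Icc 0 K, m k t) (Icc 0 T) :=
    DifferentiableOn.fun_sum fun k hk =>
      hsol.differentiableOn_density (Finset.mem_Icc.1 hk).2
  have hderiv : ∀ t ∈ Ico 0 T,
      derivWithin (fun t => ∑ k ∈ Finset.Icc 0 K, m k t) (Icc 0 T) t = 0 := by
    intro t ht
    have ht' : t ∈ Icc 0 T := Ico_subset_Icc_self ht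
    rw [derivWithin_fun_sum fun k hk =>
        hsol.differentiableOn_density (Finset.mem_Icc.1 hk).2 t ht',
      Finset.sum_congr rfl fun k hk =>
      hsol.derivWithin_density hK (Finset.mem_Icc.1 hk).2 ht', ← Nat.range_succ_eq_Icc_zero,
      Finset.sum_range_sub (fun k => marketFlux K ε V m k t)]
    simp [marketFlux]
  intro t ht
  rw [constant_of_derivWithin_zero hdiff hderiv t ht]
  exact Finset.sum_congr rfl fun k hk => hsol.density_zero (Finset.mem_Icc.1 hk).2

theorem density_nonneg_of_inflow_nonneg (hK : 1 ≤ K) (hsol : IsHJBKolSolution K T r ε M V m)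
    (hM : ∀ k, k ≤ K → 0 ≤ M k)
    (hlam : ∀ k, 1 ≤ k → k ≤ K → ∀ t ∈ Icc 0 T, 0 ≤ marketLam K ε V m k t)
    {k : ℕ} (hk : k ≤ K) (hin : ∀ t ∈ Icc 0 T, 0 ≤ marketFlux K ε V m (k + 1) t) :
    ∀ t ∈ Icc 0 T, 0 ≤ m k t := by
  refine image_nonneg_of_left_nonneg_of_deriv_nonneg_of_neg
    (fun t ht => (hsol.differentiableOn_density hk t ht).hasDerivWithinAt)
    (hsol.density_zero hk ▸ hM k hk) fun t ht hneg => ?_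
  have ht' : t ∈ Icc 0 T := Ico_subset_Icc_self ht
  have hout : marketFlux K ε V m k t ≤ 0 := by
    unfold marketFlux
    split_ifs with hk1
    · exact mul_nonpos_of_nonneg_of_nonpos (hlam k hk1.1 hk1.2 t ht') hneg.le
    · rfl
  rw [hsol.derivWithin_density hK hk ht']
  linarith [hin t ht']

theorem density_nonneg (hK : 1 ≤ K) (hsol : IsHJBKolSolution K T r ε M V m)
    (hM : ∀ k, k ≤ K → 0 ≤ M k)
    (hlam : ∀ k, 1 ≤ k → k ≤ K → ∀ t ∈ Icc 0 T, 0 ≤ marketLam K ε V m k t) :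
    ∀ k, k ≤ K → ∀ t ∈ Icc 0 T, 0 ≤ m k t := by
  intro k hk
  induction hk using Nat.decreasingInduction with
  | self =>
    refine hsol.density_nonneg_of_inflow_nonneg hK hM hlam le_rfl fun t _ => ?_
    simp [marketFlux]
  | of_succ k hk ih =>
    refine hsol.density_nonneg_of_inflow_nonneg hK hM hlam hk.le fun t ht => ?_
    rw [marketFlux, if_pos ⟨Nat.le_add_left 1 k, hk⟩]
    exact mul_nonneg (hlam (k + 1) k.succ_pos hk t ht) (ih t ht)

end IsHJBKolSolution

theorem density_bounds_of_no_interaction_general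
    (K : ℕ) (hK : 1 ≤ K) (T r : ℝ) (hr : 0 < r)
    (M : ℕ → ℝ) (hM : ∀ k, k ≤ K → 0 ≤ M k)
    (hMsum : ∑ k ∈ Finset.Icc 0 K, M k = 1)
    (V m : ℕ → ℝ → ℝ) (hsol : IsHJBKolSolution K T r 0 M V m) :
    (∀ k, 1 ≤ k → k ≤ K → ∀ t ∈ Set.Icc (0 : ℝ) T, 0 ≤ m k t ∧ m k t ≤ 1) ∧
    (∀ t ∈ Set.Icc (0 : ℝ) T, 0 ≤ marketEta K m t ∧ marketEta K m t ≤ 1) := by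
  have hlam : ∀ k, 1 ≤ k → k ≤ K → ∀ t ∈ Icc 0 T, 0 ≤ marketLam K 0 V m k t :=
    fun k hk1 hk t ht => by
      rw [marketLam_zero]
      linarith [hsol.value_gap_le_one hr hk1 hk t ht]
  have hm := hsol.density_nonneg hK hM hlam
  have hmass : ∀ t ∈ Icc 0 T, m 0 t + marketEta K m t = 1 := fun t ht => by
    rw [← hMsum, ← hsol.sum_density_eq hK t ht, ← Finset.add_sum_Ioc_eq_sum_Icc K.zero_le]
    rfl
  refine ⟨fun k hk1 hk t ht => ⟨hm k hk t ht, ?_⟩, fun t ht => ⟨?_, ?_⟩⟩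
  · have hle : m k t ≤ marketEta K m t :=
      Finset.single_le_sum (fun j hj => hm j (Finset.mem_Icc.1 hj).2 t ht)
        (Finset.mem_Icc.2 ⟨hk1, hk⟩)
    linarith [hm 0 K.zero_le t ht, hmass t ht]
  · exact Finset.sum_nonneg fun k hk => hm k (Finset.mem_Icc.1 hk).2 t ht
  · linarith [hm 0 K.zero_le t ht, hmass t ht]

/-- For the solution of the `ε = 0` system, `0 ≤ m_k⁰(t) ≤ 1` for `k = 1, …, K` and
`0 ≤ η⁰(t) = ∑_{k=1}^K m_k⁰(t) ≤ 1` on `[0, T]`. -/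
theorem density_bounds_of_no_interaction
    (K : ℕ) (hK : 1 ≤ K) (T r : ℝ) (hT : 0 < T) (hr : 0 < r)
    (M : ℕ → ℝ) (hM : ∀ k, k ≤ K → 0 ≤ M k)
    (hMsum : ∑ k ∈ Finset.Icc 0 K, M k = 1)
    (V m : ℕ → ℝ → ℝ) (hsol : IsHJBKolSolution K T r 0 M V m) :
    (∀ k, 1 ≤ k → k ≤ K → ∀ t ∈ Set.Icc (0 : ℝ) T, 0 ≤ m k t ∧ m k t ≤ 1) ∧
    (∀ t ∈ Set.Icc (0 : ℝ) T, 0 ≤ marketEta K m t ∧ marketEta K m t ≤ 1) :=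
  density_bounds_of_no_interaction_general K hK T r hr M hM hMsum V m hsol
end
end
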